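/- arXiv:0912.4783 — 2 statements merged into one kernel-verified Lean document; each statement's English description precedes it below -/
import Mathlib

section
/- Suppose the two end states and the speed s satisfy the Rankine–Hugoniot conditions with s ≠ 0 and v₊ ≠ v₋. Then the shock speed satisfies s² = γRθ₋(1−d₁)/(v₊v₋), where d = v₊−v₋, d₂ = (γ−1)d/(2v₊), and d₁ = d₂/(1+d₂). -/
/-!
Eliminating the velocity jump `u₊ - u₋ = -s (v₊ - v₋)` from the momentum condition gives
`s² (v₊ - v₋) = p₋ - p₊`, and from the energy condition (after dividing by `s ≠ 0`) the Hugoniot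
relation `e₊ - e₋ + (p₊ + p₋)(v₊ - v₋)/2 = 0`. For a perfect gas the latter expresses `p₊` as
`p₋ (2v₋ - (γ-1)d) / (2v₊ + (γ-1)d)`, and substituting into the former, `d = v₊ - v₋` cancels,
leaving `s² = 2γ p₋ / (2v₊ + (γ-1)d) = γ p₋ / (v₊ (1 + d₂))`, which is the claimed formula since
`1 - d₁ = 1 / (1 + d₂)`.
-/

section ShockRelations

variable {K : Type*} [Field K]

theorem shock_speed_sq_mul_sub {s vm vp um up pm pp : K}
    (RH1 : -s * (vp - vm) - (up - um) = 0) (RH2 : -s * (up - um) + (pp - pm) = 0) :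
    s ^ 2 * (vp - vm) = pm - pp := by
  linear_combination RH2 - s * RH1

theorem hugoniot_relation [CharZero K] {s vm vp um up pm pp em ep : K} (hs : s ≠ 0)
    (RH1 : -s * (vp - vm) - (up - um) = 0) (RH2 : -s * (up - um) + (pp - pm) = 0)
    (RH3 : -s * ((ep + up ^ 2 / 2) - (em + um ^ 2 / 2)) + (pp * up - pm * um) = 0) :
    2 * (ep - em) + (pp + pm) * (vp - vm) = 0 := by
  have h : -s * (2 * (ep - em) + (pp + pm) * (vp - vm)) = 0 := by
    linear_combination 2 * RH3 - (up + um) * RH2 + (pp + pm) * RH1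
  exact (mul_eq_zero.mp h).resolve_left (neg_ne_zero.mpr hs)

theorem perfectGas_hugoniot_relation {γ R vm vp θm θp : K}
    (hγ : γ ≠ 1) (hvm : vm ≠ 0) (hvp : vp ≠ 0)
    (h : 2 * (R * θp / (γ - 1) - R * θm / (γ - 1))
      + (R * θp / vp + R * θm / vm) * (vp - vm) = 0) :
    R * θp / vp * (2 * vp + (γ - 1) * (vp - vm))
      = R * θm / vm * (2 * vm - (γ - 1) * (vp - vm)) := by
  have hγ' : γ - 1 ≠ 0 := sub_ne_zero.mpr hγ
  field_simp at h ⊢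
  linear_combination h

/-- If both factors on the right vanished, their sum `2 (v₊ + v₋)` would too. -/
theorem two_mul_add_ne_zero_of_mul_eq_mul [CharZero K] {pm pp vm vp c : K} (hpm : pm ≠ 0)
    (hv : vp + vm ≠ 0) (h : pp * (2 * vp + c) = pm * (2 * vm - c)) :
    2 * vp + c ≠ 0 := by
  intro hA
  have hB : 2 * vm - c = 0 := by
    rw [hA, mul_zero, eq_comm, mul_eq_zero] at h
    exact h.resolve_left hpm
  exact hv (by linear_combination (hA + hB) / 2)

theorem sq_eq_of_perfectGas_hugoniot {γ s vm vp pm pp : K} (hv : vp ≠ vm)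
    (hA : 2 * vp + (γ - 1) * (vp - vm) ≠ 0) (hmom : s ^ 2 * (vp - vm) = pm - pp)
    (hhug : pp * (2 * vp + (γ - 1) * (vp - vm)) = pm * (2 * vm - (γ - 1) * (vp - vm))) :
    s ^ 2 = 2 * γ * pm / (2 * vp + (γ - 1) * (vp - vm)) := by
  rw [eq_div_iff hA]
  apply mul_right_cancel₀ (sub_ne_zero.mpr hv)
  linear_combination (2 * vp + (γ - 1) * (vp - vm)) * hmom - hhug

end ShockRelations

theorem shock_speed_formula_general
    (γ R vm vp θm θp um up s : ℝ)
    (hγ : 1 < γ) (hR : 0 < R)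
    (hvm : 0 < vm) (hvp : 0 < vp) (hθm : 0 < θm)
    (hs : s ≠ 0) (hv : vp ≠ vm)
    (RH1 : -s * (vp - vm) - (up - um) = 0)
    (RH2 : -s * (up - um) + (R * θp / vp - R * θm / vm) = 0)
    (RH3 : -s * ((R * θp / (γ - 1) + up ^ 2 / 2) - (R * θm / (γ - 1) + um ^ 2 / 2))
            + (R * θp / vp * up - R * θm / vm * um) = 0) :
    s ^ 2 = γ * R * θm *
        (1 - ((γ - 1) * (vp - vm) / (2 * vp)) / (1 + (γ - 1) * (vp - vm) / (2 * vp)))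
        / (vp * vm) := by
  have hhug := perfectGas_hugoniot_relation hγ.ne' hvm.ne' hvp.ne'
    (hugoniot_relation hs RH1 RH2 RH3)
  have hA := two_mul_add_ne_zero_of_mul_eq_mul (by positivity) (by positivity) hhug
  rw [sq_eq_of_perfectGas_hugoniot hv hA (shock_speed_sq_mul_sub RH1 RH2) hhug]
  have h1d : 1 + (γ - 1) * (vp - vm) / (2 * vp) ≠ 0 := by
    intro h
    field_simp at h
    exact hA (by linear_combination h)
  field_simp
  ring

theorem shock_speed_formula
    (γ R vm vp θm θp um up s : ℝ)
    (hγ : 1 < γ) (hR : 0 < R)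
    (hvm : 0 < vm) (hvp : 0 < vp) (hθm : 0 < θm) (hθp : 0 < θp)
    (hs : s ≠ 0) (hv : vp ≠ vm)
    (RH1 : -s * (vp - vm) - (up - um) = 0)
    (RH2 : -s * (up - um) + (R * θp / vp - R * θm / vm) = 0)
    (RH3 : -s * ((R * θp / (γ - 1) + up ^ 2 / 2) - (R * θm / (γ - 1) + um ^ 2 / 2))
            + (R * θp / vp * up - R * θm / vm * um) = 0) :
    s ^ 2 = γ * R * θm *
        (1 - ((γ - 1) * (vp - vm) / (2 * vp)) / (1 + (γ - 1) * (vp - vm) / (2 * vp)))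
        / (vp * vm) :=
  shock_speed_formula_general γ R vm vp θm θp um up s hγ hR hvm hvp hθm hs hv RH1 RH2 RH3
end

section
/- Let s>0, β∈ℝ, and let U:ℝ→ℝ be differentiable with U′ integrable on ℝ, U(ξ)→u₋ as ξ→−∞ and U(ξ)→u₊ as ξ→+∞, with U−u₊ integrable on (0,∞) and U−u₋ integrable on (−∞,0), and let u₀:(0,∞)→ℝ be such that u₀−U(·−β) is integrable on (0,∞). Define I(a) = ∫₀^∞[u₀(x)−U(x+a−β)]dx − s∫₀^∞(U(−st+a−β)−u₋)dt. Then I(a) is finite for every a∈ℝ, I is differentiable with I′(a) = u₋−u₊ for all a, hence I(a) = I(0) + (u₋−u₊)a; in particular, if u₊≠u₋, then α := I(0)/(u₊−u₋) is the unique real number with I(α)=0. -/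
/-!
After the substitutions `ξ = x + a - β` and `ξ = a - β - s t`,
`I a = C - G (a - β)` with `C` independent of `a` and
`G c = ∫_c^∞ (U - u₊) + ∫_{-∞}^c (U - u₋)`. Moving `c` to `d` changes `G` by
`∫_c^d ((U - u₋) - (U - u₊)) = (u₊ - u₋) (d - c)`,
so `I` is affine with slope `u₋ - u₊`.
-/

open Filter Set MeasureTheory

section

variable {E : Type*} [NormedAddCommGroup E]

theorem integrableOn_Ioi_of_locallyIntegrable {f : ℝ → E} {a : ℝ} (hf : LocallyIntegrable f)
    (ha : IntegrableOn f (Ioi a)) (b : ℝ) : IntegrableOn f (Ioi b) := by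
  have hba : IntegrableOn f (Icc b a) := hf.integrableOn_isCompact isCompact_Icc
  refine (hba.union ha).mono_set fun x hx => ?_
  rcases le_or_gt x a with h | h
  exacts [Or.inl ⟨le_of_lt hx, h⟩, Or.inr h]

theorem integrableOn_Iio_of_locallyIntegrable {f : ℝ → E} {a : ℝ} (hf : LocallyIntegrable f)
    (ha : IntegrableOn f (Iio a)) (b : ℝ) : IntegrableOn f (Iio b) := by
  have hab : IntegrableOn f (Icc a b) := hf.integrableOn_isCompact isCompact_Icc
  refine (ha.union hab).mono_set fun x hx => ?_
  rcases lt_or_ge x a with h | h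
  exacts [Or.inl h, Or.inr ⟨h, le_of_lt hx⟩]

theorem integrableOn_Ioi_comp_add_right_iff (f : ℝ → E) (c d : ℝ) :
    IntegrableOn (fun x => f (x + d)) (Ioi c) ↔ IntegrableOn f (Ioi (c + d)) := by
  have h := (measurePreserving_add_right volume d).integrableOn_comp_preimage
    (measurableEmbedding_addRight d) (f := f) (s := Ioi (c + d))
  rwa [preimage_add_const_Ioi, add_sub_cancel_right] at h

theorem integrableOn_Ioi_comp_sub_left_iff (f : ℝ → E) (c d : ℝ) :
    IntegrableOn (fun x => f (c - x)) (Ioi d) ↔ IntegrableOn f (Iio (c - d)) := by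
  have h := (Measure.measurePreserving_sub_left volume c).integrableOn_comp_preimage
    (measurableEmbedding_subLeft c) (f := f) (s := Iio (c - d))
  rwa [preimage_const_sub_Iio, sub_sub_cancel] at h

theorem integrableOn_Ioi_comp_sub_mul_iff (f : ℝ → E) (c : ℝ) {s : ℝ} (hs : 0 < s) :
    IntegrableOn (fun t => f (c - s * t)) (Ioi 0) ↔ IntegrableOn f (Iio c) := by
  rw [integrableOn_Ioi_comp_mul_left_iff (fun y => f (c - y)) 0 hs,
    integrableOn_Ioi_comp_sub_left_iff, mul_zero, sub_zero]

variable [NormedSpace ℝ E]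

theorem setIntegral_Ioi_comp_add_right (f : ℝ → E) (c d : ℝ) :
    ∫ x in Ioi c, f (x + d) = ∫ x in Ioi (c + d), f x := by
  have h := (measurePreserving_add_right volume d).setIntegral_preimage_emb
    (measurableEmbedding_addRight d) f (Ioi (c + d))
  rwa [preimage_add_const_Ioi, add_sub_cancel_right] at h

theorem setIntegral_Ioi_comp_sub_left (f : ℝ → E) (c d : ℝ) :
    ∫ x in Ioi d, f (c - x) = ∫ x in Iio (c - d), f x := by
  have h := (Measure.measurePreserving_sub_left volume c).setIntegral_preimage_emb
    (measurableEmbedding_subLeft c) f (Iio (c - d))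
  rwa [preimage_const_sub_Iio, sub_sub_cancel] at h

theorem setIntegral_Ioi_comp_sub_mul (f : ℝ → E) (c : ℝ) {s : ℝ} (hs : 0 < s) :
    ∫ t in Ioi 0, f (c - s * t) = s⁻¹ • ∫ x in Iio c, f x := by
  rw [integral_comp_mul_left_Ioi (fun y => f (c - y)) 0 hs, setIntegral_Ioi_comp_sub_left,
    mul_zero, sub_zero]

end

theorem integral_Ioi_sub_add_integral_Iio_sub {f : ℝ → ℝ} {p m : ℝ} (hf : Continuous f)
    (hp : ∀ c, IntegrableOn (fun x => f x - p) (Ioi c))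
    (hm : ∀ c, IntegrableOn (fun x => f x - m) (Iio c)) (c d : ℝ) :
    (∫ x in Ioi d, (f x - p)) + ∫ x in Iio d, (f x - m)
      = (∫ x in Ioi c, (f x - p)) + (∫ x in Iio c, (f x - m)) + (p - m) * (d - c) := by
  have hIoi := intervalIntegral.integral_Ioi_sub_Ioi' (hp c) (hp d)
  have hIio := intervalIntegral.integral_Iio_sub_Iio' (hm d) (hm c)
  have hdiff : (∫ x in c..d, (f x - m)) - ∫ x in c..d, (f x - p) = (p - m) * (d - c) := by
    rw [← intervalIntegral.integral_sub (f := fun x => f x - m) (g := fun x => f x - p)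
      ((hf.sub continuous_const).intervalIntegrable _ _)
      ((hf.sub continuous_const).intervalIntegrable _ _)]
    simp only [sub_sub_sub_cancel_left, intervalIntegral.integral_const, smul_eq_mul]
    ring
  linarith

section ShiftFunctional

variable {s β um up : ℝ} {U u₀ : ℝ → ℝ}

theorem integrableOn_shifted_profile (hUp : ∀ c, IntegrableOn (fun ξ => U ξ - up) (Ioi c))
    (c : ℝ) : IntegrableOn (fun x => U (x + c) - up) (Ioi 0) :=
  (integrableOn_Ioi_comp_add_right_iff (fun ξ => U ξ - up) 0 c).2 (hUp _)

theorem initial_sub_shifted_profile_eq (a : ℝ) :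
    (fun x => u₀ x - U (x + a - β)) = fun x =>
      (u₀ x - U (x - β)) + ((U (x + -β) - up) - (U (x + (a - β)) - up)) := by
  funext x
  rw [← sub_eq_add_neg, add_sub_assoc]
  ring

theorem integrableOn_initial_sub_shifted_profile
    (hUp : ∀ c, IntegrableOn (fun ξ => U ξ - up) (Ioi c))
    (hu₀ : IntegrableOn (fun x => u₀ x - U (x - β)) (Ioi 0)) (a : ℝ) :
    IntegrableOn (fun x => u₀ x - U (x + a - β)) (Ioi 0) := by
  rw [initial_sub_shifted_profile_eq (up := up)]
  exact hu₀.add ((integrableOn_shifted_profile hUp _).sub (integrableOn_shifted_profile hUp _))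

theorem setIntegral_initial_sub_shifted_profile
    (hUp : ∀ c, IntegrableOn (fun ξ => U ξ - up) (Ioi c))
    (hu₀ : IntegrableOn (fun x => u₀ x - U (x - β)) (Ioi 0)) (a : ℝ) :
    ∫ x in Ioi 0, (u₀ x - U (x + a - β)) = (∫ x in Ioi 0, (u₀ x - U (x - β)))
      + (∫ ξ in Ioi (-β), (U ξ - up)) - ∫ ξ in Ioi (a - β), (U ξ - up) := by
  have hβ := integrableOn_shifted_profile hUp (-β)
  have haβ := integrableOn_shifted_profile hUp (a - β)
  have hdiff : IntegrableOn (fun x => (U (x + -β) - up) - (U (x + (a - β)) - up)) (Ioi 0) :=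
    hβ.sub haβ
  rw [initial_sub_shifted_profile_eq (up := up), integral_add hu₀ hdiff,
    integral_sub hβ haβ, setIntegral_Ioi_comp_add_right (fun ξ => U ξ - up),
    setIntegral_Ioi_comp_add_right (fun ξ => U ξ - up), zero_add, zero_add, add_sub_assoc]

theorem boundary_trace_eq (a : ℝ) :
    (fun t => U (-s * t + a - β) - um) = fun t => U ((a - β) - s * t) - um := by
  funext t
  ring_nf

theorem integrableOn_boundary_trace (hs : 0 < s)
    (hUm : ∀ c, IntegrableOn (fun ξ => U ξ - um) (Iio c)) (a : ℝ) :
    IntegrableOn (fun t => U (-s * t + a - β) - um) (Ioi 0) := by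
  rw [boundary_trace_eq]
  exact (integrableOn_Ioi_comp_sub_mul_iff (fun ξ => U ξ - um) _ hs).2 (hUm _)

theorem mul_setIntegral_boundary_trace (hs : 0 < s) (a : ℝ) :
    s * ∫ t in Ioi 0, (U (-s * t + a - β) - um) = ∫ ξ in Iio (a - β), (U ξ - um) := by
  rw [boundary_trace_eq, setIntegral_Ioi_comp_sub_mul (fun ξ => U ξ - um) _ hs,
    smul_eq_mul, ← mul_assoc, mul_inv_cancel₀ hs.ne', one_mul]

end ShiftFunctional

theorem shift_functional_properties_general
    (s β um up : ℝ) (U u₀ : ℝ → ℝ) (I : ℝ → ℝ)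
    (hs : 0 < s)
    (hUdiff : Differentiable ℝ U)
    (hUp : IntegrableOn (fun ξ => U ξ - up) (Ioi 0))
    (hUm : IntegrableOn (fun ξ => U ξ - um) (Iio 0))
    (hu₀ : IntegrableOn (fun x => u₀ x - U (x - β)) (Ioi 0))
    (hI : I = fun a => (∫ x in Ioi (0:ℝ), (u₀ x - U (x + a - β)))
        - s * ∫ t in Ioi (0:ℝ), (U (-s * t + a - β) - um)) :
    -- I(a) is finite for every a (both integrals converge absolutely)
    (∀ a : ℝ, IntegrableOn (fun x => u₀ x - U (x + a - β)) (Ioi 0) ∧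
        IntegrableOn (fun t => U (-s * t + a - β) - um) (Ioi 0)) ∧
    -- I is differentiable with I′(a) = u₋ − u₊
    (∀ a : ℝ, HasDerivAt I (um - up) a) ∧
    -- hence I(a) = I(0) + (u₋−u₊)a
    (∀ a : ℝ, I a = I 0 + (um - up) * a) ∧
    -- if u₊ ≠ u₋ then α := I(0)/(u₊−u₋) is the unique zero of I
    (up ≠ um → I (I 0 / (up - um)) = 0 ∧ ∀ a : ℝ, I a = 0 → a = I 0 / (up - um)) := by
  have hU : Continuous U := hUdiff.continuous
  have hUp' : ∀ c, IntegrableOn (fun ξ => U ξ - up) (Ioi c) :=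
    integrableOn_Ioi_of_locallyIntegrable (hU.sub continuous_const).locallyIntegrable hUp
  have hUm' : ∀ c, IntegrableOn (fun ξ => U ξ - um) (Iio c) :=
    integrableOn_Iio_of_locallyIntegrable (hU.sub continuous_const).locallyIntegrable hUm
  have hIa : ∀ a, I a = (∫ x in Ioi 0, (u₀ x - U (x - β))) + (∫ ξ in Ioi (-β), (U ξ - up))
      - ((∫ ξ in Ioi (a - β), (U ξ - up)) + ∫ ξ in Iio (a - β), (U ξ - um)) := fun a => by
    rw [hI]
    dsimp only
    rw [setIntegral_initial_sub_shifted_profile hUp' hu₀, mul_setIntegral_boundary_trace hs]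
    ring
  have hlin : ∀ a, I a = I 0 + (um - up) * a := fun a => by
    rw [hIa a, hIa 0, integral_Ioi_sub_add_integral_Iio_sub hU hUp' hUm' (0 - β) (a - β)]
    ring
  refine ⟨fun a => ⟨integrableOn_initial_sub_shifted_profile hUp' hu₀ a,
    integrableOn_boundary_trace hs hUm' a⟩, fun a => ?_, hlin, fun hne => ?_⟩
  · rw [funext hlin]
    simpa using ((hasDerivAt_id a).const_mul (um - up)).const_add (I 0)
  · have hne' : up - um ≠ 0 := sub_ne_zero.2 hne
    refine ⟨by rw [hlin]; field_simp; ring, fun a ha => ?_⟩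
    rw [eq_div_iff hne']
    linarith [hlin a]

theorem shift_functional_properties
    (s β um up : ℝ) (U u₀ : ℝ → ℝ) (I : ℝ → ℝ)
    (hs : 0 < s)
    (hUdiff : Differentiable ℝ U)
    (hU'int : Integrable (deriv U))
    (hUbot : Tendsto U atBot (nhds um))
    (hUtop : Tendsto U atTop (nhds up))
    (hUp : IntegrableOn (fun ξ => U ξ - up) (Ioi 0))
    (hUm : IntegrableOn (fun ξ => U ξ - um) (Iio 0))
    (hu₀ : IntegrableOn (fun x => u₀ x - U (x - β)) (Ioi 0))
    (hI : I = fun a => (∫ x in Ioi (0:ℝ), (u₀ x - U (x + a - β)))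
        - s * ∫ t in Ioi (0:ℝ), (U (-s * t + a - β) - um)) :
    -- I(a) is finite for every a (both integrals converge absolutely)
    (∀ a : ℝ, IntegrableOn (fun x => u₀ x - U (x + a - β)) (Ioi 0) ∧
        IntegrableOn (fun t => U (-s * t + a - β) - um) (Ioi 0)) ∧
    -- I is differentiable with I′(a) = u₋ − u₊
    (∀ a : ℝ, HasDerivAt I (um - up) a) ∧
    -- hence I(a) = I(0) + (u₋−u₊)a
    (∀ a : ℝ, I a = I 0 + (um - up) * a) ∧
    -- if u₊ ≠ u₋ then α := I(0)/(u₊−u₋) is the unique zero of I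
    (up ≠ um → I (I 0 / (up - um)) = 0 ∧ ∀ a : ℝ, I a = 0 → a = I 0 / (up - um)) :=
  shift_functional_properties_general s β um up U u₀ I hs hUdiff hUp hUm hu₀ hI
end
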